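/- Let T = (V, E) be a tree. Then LMC(T) (the convex hull of characteristic vectors of multicuts of the complete graph on V lifted from T) equals the convex hull of all x ∈ {0,1}^{binom(V,2)} satisfying: for all u,v ∈ V with d(u,v) ≥ 2, x_{uv} ≤ Σ_{e ∈ E_{uv}} x_e, and x_e ≤ x_{uv} for every edge e on the unique u–v path in T; here E_{uv} is the edge set of the unique u–v path in T and d(u,v) its length. -/

import Mathlib

open Finset

open scoped Classical

variable {V : Type*}

/-- A decomposition of a graph `G`: a partition of the node set all of whose blocks
induce connected subgraphs. -/
def IsDecomposition (G : SimpleGraph V) (P : Set (Set V)) : Prop :=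
  Setoid.IsPartition P ∧ ∀ U ∈ P, (G.induce U).Connected

/-- Two nodes lie in a common block of `P`. -/
def SameBlock (P : Set (Set V)) (u v : V) : Prop :=
  ∃ U ∈ P, u ∈ U ∧ v ∈ U

/-- The edge `e` straddles two distinct blocks of `P`. -/
def Crosses (P : Set (Set V)) (e : Sym2 V) : Prop :=
  ∃ u v, e = s(u, v) ∧ ¬ SameBlock P u v

/-- The multicut of `G` induced by a decomposition `P`. -/
def inducedMulticut (G : SimpleGraph V) (P : Set (Set V)) : Set (Sym2 V) :=
  {e | e ∈ G.edgeSet ∧ Crosses P e}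

/-- `M` is a multicut of `G`. -/
def IsMulticut (G : SimpleGraph V) (M : Set (Sym2 V)) : Prop :=
  ∃ P, IsDecomposition G P ∧ M = inducedMulticut G P

/-- The characteristic vector (in the ambient space `Sym2 V → ℝ`, with coordinates
outside the edge set of `H` pinned to `0`) of the multicut of `H` induced by `P`. -/
noncomputable def multicutVec (H : SimpleGraph V) (P : Set (Set V)) : Sym2 V → ℝ :=
  fun e => if e ∈ H.edgeSet ∧ Crosses P e then 1 else 0

/-- Characteristic vectors of multicuts of `H` lifted from `G`. -/
def liftedVectors (G H : SimpleGraph V) : Set (Sym2 V → ℝ) :=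
  {x | ∃ P, IsDecomposition G P ∧ x = multicutVec H P}

/-- The lifted multicut polytope with respect to `G` and `H`. -/
def LMC (G H : SimpleGraph V) : Set (Sym2 V → ℝ) :=
  convexHull ℝ (liftedVectors G H)

/-- The inequality `f x ≤ b` is valid for `P` and its equality set has affine dimension
`|E ∪ F| - 1`, i.e. one less than the dimension of the corresponding lifted multicut
polytope for the augmented graph `H`. -/
def DefinesFacet (H : SimpleGraph V) (P : Set (Sym2 V → ℝ))
    (f : (Sym2 V → ℝ) → ℝ) (b : ℝ) : Prop :=
  (∀ x ∈ P, f x ≤ b) ∧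
  Module.finrank ℝ (affineSpan ℝ {x | x ∈ P ∧ f x = b}).direction + 1 = Nat.card H.edgeSet

/-!
A 0/1 vector `x` on pairs of nodes is the multicut vector of a partition exactly when
`{uv | x uv = 0}` is an equivalence relation whose classes are the blocks. On a tree the cut
and path inequalities say that `x uv = 0` iff `x` vanishes on every edge of the `u`–`v` path.
Concatenating and shortening paths makes this relation transitive, and initial segments of a
path from `y` keep every intermediate node in the class of `y`, so the classes are connected.
Conversely, for a decomposition the tree path between two nodes of a block stays in the block
(it is the shortening of any path inside the block), while a path between distinct blocks must
use a crossing edge.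
-/

section Partition

variable {P : Set (Set V)}

theorem SameBlock.symm {u v : V} (h : SameBlock P u v) : SameBlock P v u :=
  let ⟨U, hU, hu, hv⟩ := h
  ⟨U, hU, hv, hu⟩

theorem sameBlock_refl (hP : Setoid.IsPartition P) (u : V) : SameBlock P u u :=
  let ⟨U, ⟨hU, hu⟩, _⟩ := hP.2 u
  ⟨U, hU, hu, hu⟩

theorem SameBlock.trans (hP : Setoid.IsPartition P) {u v w : V}
    (h₁ : SameBlock P u v) (h₂ : SameBlock P v w) : SameBlock P u w := by
  obtain ⟨U, hU, hu, hvU⟩ := h₁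
  obtain ⟨W, hW, hvW, hw⟩ := h₂
  obtain ⟨B, -, hB⟩ := hP.2 v
  obtain rfl : U = W := (hB U ⟨hU, hvU⟩).trans (hB W ⟨hW, hvW⟩).symm
  exact ⟨U, hU, hu, hw⟩

theorem crosses_mk_iff {a b : V} : Crosses P s(a, b) ↔ ¬ SameBlock P a b := by
  refine ⟨?_, fun h => ⟨a, b, rfl, h⟩⟩
  rintro ⟨u, v, huv, hn⟩ hab
  rcases Sym2.eq_iff.mp huv with ⟨rfl, rfl⟩ | ⟨rfl, rfl⟩
  exacts [hn hab, hn hab.symm]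

theorem sameBlock_classes_iff (r : Setoid V) {u v : V} : SameBlock r.classes u v ↔ r u v := by
  refine ⟨?_, fun h => ⟨{z | r z v}, ⟨v, rfl⟩, h, r.refl' v⟩⟩
  rintro ⟨U, ⟨y, rfl⟩, hu, hv⟩
  exact r.trans' hu (r.symm' hv)

end Partition

theorem multicutVec_eq_zero_or_one (H : SimpleGraph V) (P : Set (Set V)) (e : Sym2 V) :
    multicutVec H P e = 0 ∨ multicutVec H P e = 1 := by
  unfold multicutVec
  split_ifs <;> simp

theorem multicutVec_nonneg (H : SimpleGraph V) (P : Set (Set V)) (e : Sym2 V) :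
    0 ≤ multicutVec H P e := by
  rcases multicutVec_eq_zero_or_one H P e with h | h <;> simp [h]

theorem multicutVec_le_one (H : SimpleGraph V) (P : Set (Set V)) (e : Sym2 V) :
    multicutVec H P e ≤ 1 := by
  rcases multicutVec_eq_zero_or_one H P e with h | h <;> simp [h]

theorem multicutVec_of_isDiag (H : SimpleGraph V) (P : Set (Set V)) {e : Sym2 V}
    (he : e.IsDiag) : multicutVec H P e = 0 :=
  if_neg fun h => H.not_mem_edgeSet_of_isDiag he h.1

theorem multicutVec_top_mk {P : Set (Set V)} (hP : Setoid.IsPartition P) (a b : V) :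
    multicutVec ⊤ P s(a, b) = if SameBlock P a b then 0 else 1 := by
  unfold multicutVec
  by_cases hab : SameBlock P a b
  · simp [hab, crosses_mk_iff]
  · have hne : a ≠ b := by rintro rfl; exact hab (sameBlock_refl hP a)
    simp [hab, hne, crosses_mk_iff]

namespace SimpleGraph

variable {G : SimpleGraph V} {P : Set (Set V)}

theorem IsAcyclic.eq_of_isPath (hG : G.IsAcyclic) {u v : V} {p q : G.Walk u v}
    (hp : p.IsPath) (hq : q.IsPath) : p = q :=
  congrArg Subtype.val ((hG.subsingleton_path u v).elim ⟨p, hp⟩ ⟨q, hq⟩)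

theorem IsAcyclic.support_subset_of_isPath (hG : G.IsAcyclic) {U : Set V}
    (hU : (G.induce U).Connected) {u v : V} (hu : u ∈ U) (hv : v ∈ U) {p : G.Walk u v}
    (hp : p.IsPath) : ∀ z ∈ p.support, z ∈ U := by
  obtain ⟨w⟩ := hU ⟨u, hu⟩ ⟨v, hv⟩
  set q := w.map (Embedding.induce U).toHom
  have hq : ∀ z ∈ q.support, z ∈ U := by
    simp only [q, Walk.support_map, List.mem_map]
    rintro _ ⟨z, -, rfl⟩
    exact z.2
  rw [hG.eq_of_isPath hp q.bypass_isPath]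
  exact fun z hz => hq z (q.support_bypass_subset_support hz)

theorem IsAcyclic.sameBlock_of_mem_edges (hG : G.IsAcyclic) (hD : IsDecomposition G P)
    {u v : V} (huv : SameBlock P u v) {p : G.Walk u v} (hp : p.IsPath) {a b : V}
    (hab : s(a, b) ∈ p.edges) : SameBlock P a b := by
  obtain ⟨U, hU, hu, hv⟩ := huv
  have hsupp := hG.support_subset_of_isPath (hD.2 U hU) hu hv hp
  exact ⟨U, hU, hsupp a (p.fst_mem_support_of_mem_edges hab),
    hsupp b (p.snd_mem_support_of_mem_edges hab)⟩

theorem Walk.exists_mem_edges_not_sameBlock (hP : Setoid.IsPartition P) :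
    ∀ {u v : V} (p : G.Walk u v), ¬ SameBlock P u v →
      ∃ a b, s(a, b) ∈ p.edges ∧ ¬ SameBlock P a b
  | u, _, .nil, huv => absurd (sameBlock_refl hP u) huv
  | u, _, .cons (v := c) _ q, huv => by
    by_cases huc : SameBlock P u c
    · obtain ⟨a, b, hab, hn⟩ :=
        q.exists_mem_edges_not_sameBlock hP fun hcv => huv (huc.trans hP hcv)
      exact ⟨a, b, List.mem_cons_of_mem _ hab, hn⟩
    · exact ⟨u, c, List.mem_cons_self .., huc⟩

def IsPathCutVector (G : SimpleGraph V) (x : Sym2 V → ℝ) : Prop :=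
  (∀ e : Sym2 V, ¬ e.IsDiag → (x e = 0 ∨ x e = 1)) ∧
  (∀ e : Sym2 V, e.IsDiag → x e = 0) ∧
  (∀ u v : V, u ≠ v → ¬ G.Adj u v → ∀ p : G.Walk u v, p.IsPath →
    (x s(u, v) ≤ ∑ e ∈ p.edges.toFinset, x e) ∧
    (∀ e ∈ p.edges, x e ≤ x s(u, v)))

theorem IsAcyclic.isPathCutVector_multicutVec (hG : G.IsAcyclic) (hD : IsDecomposition G P) :
    G.IsPathCutVector (multicutVec ⊤ P) := by
  refine ⟨fun e _ => multicutVec_eq_zero_or_one _ _ e,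
    fun e he => multicutVec_of_isDiag _ _ he, fun u v _ _ p hp => ?_⟩
  rw [multicutVec_top_mk hD.1]
  split_ifs with huv
  · refine ⟨Finset.sum_nonneg fun e _ => multicutVec_nonneg _ _ e, fun e he => ?_⟩
    induction e using Sym2.ind with
    | _ a b => simp [multicutVec_top_mk hD.1, hG.sameBlock_of_mem_edges hD huv hp he]
  · refine ⟨?_, fun e _ => multicutVec_le_one _ _ e⟩
    obtain ⟨a, b, hab, hn⟩ := p.exists_mem_edges_not_sameBlock hD.1 huv
    calc (1 : ℝ) = multicutVec ⊤ P s(a, b) := by simp [multicutVec_top_mk hD.1, hn]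
      _ ≤ ∑ e ∈ p.edges.toFinset, multicutVec ⊤ P e :=
        Finset.single_le_sum (fun e _ => multicutVec_nonneg _ _ e) (List.mem_toFinset.mpr hab)

namespace IsPathCutVector

variable {x : Sym2 V → ℝ} (hx : G.IsPathCutVector x)
include hx

theorem nonneg (e : Sym2 V) : 0 ≤ x e := by
  by_cases he : e.IsDiag
  · exact (hx.2.1 e he).ge
  · rcases hx.1 e he with h | h <;> simp [h]

theorem path_cut_ineq (hG : G.IsAcyclic) {u v : V} {p : G.Walk u v} (hp : p.IsPath) :
    (x s(u, v) ≤ ∑ e ∈ p.edges.toFinset, x e) ∧ (∀ e ∈ p.edges, x e ≤ x s(u, v)) := by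
  by_cases huv : u = v
  · subst huv
    obtain rfl := (Walk.isPath_iff_nil.mp hp).eq_nil
    simp [hx.2.1 s(u, u) (Sym2.mk_isDiag_iff.mpr rfl)]
  by_cases hadj : G.Adj u v
  · obtain rfl := hG.eq_of_isPath hp (Walk.IsPath.mk' (p := Walk.cons hadj .nil) (by simp [huv]))
    simp
  · exact hx.2.2 u v huv hadj p hp

theorem eq_zero_iff_of_isPath (hG : G.IsAcyclic) {u v : V} {p : G.Walk u v} (hp : p.IsPath) :
    x s(u, v) = 0 ↔ ∀ e ∈ p.edges, x e = 0 := by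
  obtain ⟨hsum, hcut⟩ := hx.path_cut_ineq hG hp
  refine ⟨fun h e he => le_antisymm (h ▸ hcut e he) (hx.nonneg e), fun h => ?_⟩
  refine le_antisymm ?_ (hx.nonneg _)
  calc x s(u, v) ≤ ∑ e ∈ p.edges.toFinset, x e := hsum
    _ = 0 := Finset.sum_eq_zero fun e he => h e (List.mem_toFinset.mp he)

theorem eq_zero_trans (hT : G.IsTree) {u v w : V} (huv : x s(u, v) = 0) (hvw : x s(v, w) = 0) :
    x s(u, w) = 0 := by
  obtain ⟨p, hp, -⟩ := hT.existsUnique_path u v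
  obtain ⟨q, hq, -⟩ := hT.existsUnique_path v w
  rw [hx.eq_zero_iff_of_isPath hT.isAcyclic (p.append q).bypass_isPath]
  intro e he
  rcases List.mem_append.mp (Walk.edges_append p q ▸ (p.append q).edges_bypass_subset_edges he)
    with he | he
  exacts [(hx.eq_zero_iff_of_isPath hT.isAcyclic hp).mp huv e he,
    (hx.eq_zero_iff_of_isPath hT.isAcyclic hq).mp hvw e he]

def zeroSetoid (hT : G.IsTree) : Setoid V where
  r u v := x s(u, v) = 0
  iseqv :=
    { refl _ := hx.2.1 _ (Sym2.mk_isDiag_iff.mpr rfl)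
      symm := fun h => Sym2.eq_swap ▸ h
      trans := hx.eq_zero_trans hT }

theorem induce_connected_of_mem_classes (hT : G.IsTree) {U : Set V}
    (hU : U ∈ (hx.zeroSetoid hT).classes) : (G.induce U).Connected := by
  obtain ⟨y, rfl⟩ := hU
  have hy : y ∈ {z | x s(z, y) = 0} := (hx.zeroSetoid hT).refl' y
  refine (connected_iff_exists_forall_reachable _).mpr ⟨⟨y, hy⟩, ?_⟩
  rintro ⟨a, ha⟩
  obtain ⟨p, hp, -⟩ := hT.existsUnique_path y a
  have hpa := (hx.eq_zero_iff_of_isPath hT.isAcyclic hp).mp (Sym2.eq_swap ▸ ha)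
  have hsupp : ∀ z ∈ p.support, z ∈ {z | x s(z, y) = 0} := by
    intro z hz
    show x s(z, y) = 0
    rw [Sym2.eq_swap]
    exact (hx.eq_zero_iff_of_isPath hT.isAcyclic (hp.takeUntil hz)).mpr
      fun e he => hpa e (p.edges_takeUntil_subset_edges hz he)
  exact (p.induce _ hsupp).reachable

theorem multicutVec_classes_zeroSetoid (hT : G.IsTree) :
    multicutVec ⊤ (hx.zeroSetoid hT).classes = x := by
  funext e
  induction e using Sym2.ind with
  | _ a b =>
    rw [multicutVec_top_mk (Setoid.isPartition_classes _), sameBlock_classes_iff]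
    show (if x s(a, b) = 0 then (0 : ℝ) else 1) = x s(a, b)
    split_ifs with h
    · exact h.symm
    · have hab : ¬ s(a, b).IsDiag := fun hd => h (hx.2.1 _ hd)
      exact ((hx.1 _ hab).resolve_left h).symm

end IsPathCutVector

theorem IsTree.liftedVectors_top_eq (hT : G.IsTree) :
    liftedVectors G ⊤ = {x | G.IsPathCutVector x} := by
  ext x
  constructor
  · rintro ⟨P, hD, rfl⟩
    exact hT.isAcyclic.isPathCutVector_multicutVec hD
  · intro hx
    exact ⟨_, ⟨Setoid.isPartition_classes _, fun U hU => hx.induce_connected_of_mem_classes hT hU⟩,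
      (hx.multicutVec_classes_zeroSetoid hT).symm⟩

end SimpleGraph

theorem lmc_tree_eq_hull_path_cut_general
    {V : Type*} (G : SimpleGraph V) (hT : G.IsTree) :
    LMC G ⊤ = convexHull ℝ {x : Sym2 V → ℝ |
      (∀ e : Sym2 V, ¬ e.IsDiag → (x e = 0 ∨ x e = 1)) ∧
      (∀ e : Sym2 V, e.IsDiag → x e = 0) ∧
      (∀ u v : V, u ≠ v → ¬ G.Adj u v → ∀ p : G.Walk u v, p.IsPath →
        (x s(u, v) ≤ ∑ e ∈ p.edges.toFinset, x e) ∧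
        (∀ e ∈ p.edges, x e ≤ x s(u, v)))} :=
  congrArg (convexHull ℝ) hT.liftedVectors_top_eq

/-- for a tree `T`, the lifted multicut polytope `LMC(T)` (lifting to the
complete graph) is the convex hull of all binary vectors satisfying the path
inequalities and the cut inequalities along the unique paths of the tree. -/
theorem lmc_tree_eq_hull_path_cut
    {V : Type*} [Fintype V] (G : SimpleGraph V) (hT : G.IsTree) :
    LMC G ⊤ = convexHull ℝ {x : Sym2 V → ℝ |
      (∀ e : Sym2 V, ¬ e.IsDiag → (x e = 0 ∨ x e = 1)) ∧
      (∀ e : Sym2 V, e.IsDiag → x e = 0) ∧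
      (∀ u v : V, u ≠ v → ¬ G.Adj u v → ∀ p : G.Walk u v, p.IsPath →
        (x s(u, v) ≤ ∑ e ∈ p.edges.toFinset, x e) ∧
        (∀ e ∈ p.edges, x e ≤ x s(u, v)))} :=
  lmc_tree_eq_hull_path_cut_general G hT
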